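/- arXiv:2207.04381 — 2 statements merged into one kernel-verified Lean document; each statement's English description precedes it below -/
import Mathlib

section
/- Let h > 0 and L = h·(n + 1/2) with n ∈ ℤ_{>0}, let Z be an integrable real random variable supported in [−L, L], and let Z̃ be its (h, L)-discretization. Then for every k ∈ ℤ_{>0}, every η ∈ (0, 1), and every s ∈ ℝ, Pr[|Z̃^{⊕k}| > s] ≤ η + Pr[|Z^{⊕k}| > s − h·√((k/2)·log(2/η))]. -/
open MeasureTheory ProbabilityTheory Real

noncomputable section

/-- The convolution of two Borel measures on `ℝ`:
the distribution of the sum of independent samples. -/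
def mconv (μ ν : MeasureTheory.Measure ℝ) : MeasureTheory.Measure ℝ :=
  (μ.prod ν).map fun p => p.1 + p.2

/-- `convPow μ k` is the `k`-fold convolution power of `μ`,
i.e. the distribution of the sum of `k` independent samples from `μ`. -/
def convPow (μ : MeasureTheory.Measure ℝ) : ℕ → MeasureTheory.Measure ℝ
  | 0 => MeasureTheory.Measure.dirac 0
  | n + 1 => mconv (convPow μ n) μ

/-- `δ_Y(ε) = E[max(0, 1 - e^{ε - Y})]` for a random variable `Y` with distribution `μ`. -/
def deltaCurve (μ : MeasureTheory.Measure ℝ) (ε : ℝ) : ℝ :=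
  ∫ y, max 0 (1 - Real.exp (ε - y)) ∂μ

/-- `ε_Y(δ) = inf {ε : δ_Y(ε) ≤ δ}`. -/
def epsCurve (μ : MeasureTheory.Measure ℝ) (δ : ℝ) : ℝ :=
  sInf {ε : ℝ | deltaCurve μ ε ≤ δ}

/-- A privacy loss random variable (PRV): a real random variable `Y` with `E[e^{-Y}] = 1`. -/
def IsPRV (μ : MeasureTheory.Measure ℝ) : Prop :=
  MeasureTheory.IsProbabilityMeasure μ ∧ (∫ y, Real.exp (-y) ∂μ) = 1

/-- `|X - Y| ≤_η h` : there is a coupling of the distributions `μ` of `X` and `ν` of `Y`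
under which `Pr[|X - Y| > h] ≤ η`. -/
def CouplingApprox (μ ν : MeasureTheory.Measure ℝ) (η h : ℝ) : Prop :=
  ∃ γ : MeasureTheory.Measure (ℝ × ℝ), MeasureTheory.IsProbabilityMeasure γ ∧
    γ.map Prod.fst = μ ∧ γ.map Prod.snd = ν ∧
    (γ {p : ℝ × ℝ | h < |p.1 - p.2|}).toReal ≤ η

/-- Total variation distance: `sup_B |μ(B) - ν(B)|` over Borel sets `B`. -/
def tvDist (μ ν : MeasureTheory.Measure ℝ) : ℝ :=
  ⨆ B : {B : Set ℝ // MeasurableSet B}, |(μ B.1).toReal - (ν B.1).toReal|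

/-- `L ∈ h · (1/2 + ℤ_{>0})`, i.e. `L = h(n + 1/2)` for a positive integer `n`. -/
def IsHalfGrid (h L : ℝ) : Prop := ∃ n : ℕ, 0 < n ∧ L = h * ((n : ℝ) + 1 / 2)

/-- The rounding map `R(t) = h · max(-n, ⌈t/h - 1/2⌉)` where `L = h(n + 1/2)`. -/
def discRound (h L t : ℝ) : ℝ :=
  h * ((max (-⌊L / h - 1 / 2⌋) ⌈t / h - 1 / 2⌉ : ℤ) : ℝ)

/-- The mean-correction shift `μ = E[Z - R(Z)]` used in the discretization. -/
def discMean (h L : ℝ) (μ : MeasureTheory.Measure ℝ) : ℝ :=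
  (∫ t, t ∂μ) - ∫ t, discRound h L t ∂μ

/-- The `(h, L)`-discretization `Z̃ = R(Z) + E[Z - R(Z)]` of a random variable `Z`
with distribution `μ`. -/
def discretize (h L : ℝ) (μ : MeasureTheory.Measure ℝ) : MeasureTheory.Measure ℝ :=
  μ.map fun t => discRound h L t + discMean h L μ

/-- The wrapping map `w_L : ℝ → (-L, L]` with `w_L(x) ≡ x (mod 2L)`. -/
def wrap (L x : ℝ) : ℝ := x - 2 * L * ((⌈x / (2 * L) - 1 / 2⌉ : ℤ) : ℝ)

/-- `Z^{⊕_L k}`: the `k`-fold convolution wrapped into `(-L, L]`. -/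
def wconvPow (μ : MeasureTheory.Measure ℝ) (L : ℝ) (k : ℕ) : MeasureTheory.Measure ℝ :=
  (convPow μ k).map (wrap L)

/-- `Y` conditioned on `|Y| ≤ L`. -/
def condAbs (μ : MeasureTheory.Measure ℝ) (L : ℝ) : MeasureTheory.Measure ℝ :=
  ProbabilityTheory.cond μ {x : ℝ | |x| ≤ L}

end

/-!
Couple `Z̃` with `Z` through `t ↦ (R t + μ, t)`. The error `Z̃ - Z` has mean zero and takes values
in an interval of length `h`, so by Hoeffding's lemma it is sub-Gaussian with variance proxy
`(h/2)²`. Convolving the coupling `k` times couples `Z̃^{⊕k}` with `Z^{⊕k}`, with error the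
`k`-fold convolution of the one-step error, which is `k(h/2)²`-sub-Gaussian; hence it exceeds
`t = h √((k/2) log(2/η))` in absolute value with probability at most
`2 exp (-t² / (2k(h/2)²)) = η`, and `|Z̃^{⊕k}| > s` forces either that or `|Z^{⊕k}| > s - t`.
-/

open scoped NNReal

namespace MeasureTheory.Measure

variable {M : Type*} [AddMonoid M] [MeasurableSpace M]

noncomputable def iterConv (μ : Measure M) : ℕ → Measure M
  | 0 => dirac 0
  | k + 1 => iterConv μ k ∗ μ

instance instSFiniteIterConv (μ : Measure M) [SFinite μ] (k : ℕ) : SFinite (μ.iterConv k) := by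
  induction k with
  | zero => dsimp only [iterConv]; infer_instance
  | succ k ih => dsimp only [iterConv, conv]; infer_instance

instance instIsProbabilityMeasureIterConv [MeasurableAdd₂ M] (μ : Measure M)
    [IsProbabilityMeasure μ] (k : ℕ) : IsProbabilityMeasure (μ.iterConv k) := by
  induction k with
  | zero => dsimp only [iterConv]; infer_instance
  | succ k ih => exact isProbabilityMeasure_map (by fun_prop)

lemma map_iterConv_addMonoidHom [MeasurableAdd₂ M] {M' : Type*} [AddMonoid M'] [MeasurableSpace M']
    [MeasurableAdd₂ M'] (μ : Measure M) [SFinite μ] (L : M →+ M') (hL : Measurable L) (k : ℕ) :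
    (μ.iterConv k).map L = (μ.map L).iterConv k := by
  induction k with
  | zero => simp [iterConv, map_dirac' hL]
  | succ k ih => rw [iterConv, map_conv_addMonoidHom L hL, ih]; rfl

end MeasureTheory.Measure

open MeasureTheory.Measure

lemma convPow_eq_iterConv (μ : Measure ℝ) (k : ℕ) : convPow μ k = μ.iterConv k := by
  induction k with
  | zero => rfl
  | succ k ih => rw [convPow, ih]; rfl

namespace ProbabilityTheory.HasSubgaussianMGF

lemma conv {μ ν : Measure ℝ} [IsProbabilityMeasure μ] [IsProbabilityMeasure ν] {c d : ℝ≥0}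
    (hμ : HasSubgaussianMGF id c μ) (hν : HasSubgaussianMGF id d ν) :
    HasSubgaussianMGF id (c + d) (μ ∗ ν) := by
  rw [← measurePreserving_fst (μ := μ) (ν := ν) |>.map_eq] at hμ
  rw [← measurePreserving_snd (μ := μ) (ν := ν) |>.map_eq] at hν
  rw [id_map_iff (by fun_prop)] at hμ hν
  rw [Measure.conv, id_map_iff (by fun_prop)]
  exact hμ.add_of_indepFun hν (indepFun_prod (X := id) (Y := id) measurable_id measurable_id)

lemma iterConv {μ : Measure ℝ} [IsProbabilityMeasure μ] {c : ℝ≥0}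
    (hμ : HasSubgaussianMGF id c μ) (k : ℕ) : HasSubgaussianMGF id (k * c) (μ.iterConv k) := by
  induction k with
  | zero => simpa [Measure.iterConv] using (fun_zero (μ := dirac (0:ℝ))).congr (ae_eq_dirac id).symm
  | succ k ih => simpa [Measure.iterConv, add_mul] using ih.conv hμ

lemma measureReal_abs_ge_le {Ω : Type*} [MeasurableSpace Ω] {μ : Measure Ω} [IsFiniteMeasure μ]
    {X : Ω → ℝ} {c : ℝ≥0} (h : HasSubgaussianMGF X c μ) {ε : ℝ} (hε : 0 ≤ ε) :
    μ.real {ω | ε ≤ |X ω|} ≤ 2 * exp (-ε ^ 2 / (2 * c)) := by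
  have hsub : {ω | ε ≤ |X ω|} ⊆ {ω | ε ≤ X ω} ∪ {ω | ε ≤ (-X) ω} := fun ω hω => by
    rcases le_abs'.mp (show ε ≤ |X ω| from hω) with hneg | hpos
    · exact Or.inr (show ε ≤ -X ω by linarith)
    · exact Or.inl hpos
  calc μ.real {ω | ε ≤ |X ω|} ≤ μ.real {ω | ε ≤ X ω} + μ.real {ω | ε ≤ (-X) ω} :=
        (measureReal_mono hsub).trans (measureReal_union_le _ _)
    _ ≤ 2 * exp (-ε ^ 2 / (2 * c)) := by linarith [h.measure_ge_le hε, h.neg.measure_ge_le hε]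

end ProbabilityTheory.HasSubgaussianMGF

@[fun_prop]
lemma measurable_discRound (h L : ℝ) : Measurable (discRound h L) := by
  unfold discRound
  fun_prop

lemma abs_discRound_sub_le {h : ℝ} (hh : 0 < h) {n : ℕ} {L : ℝ} (hL : L = h * ((n : ℝ) + 1 / 2))
    {t : ℝ} (ht : t ∈ Set.Icc (-L) L) : |discRound h L t - t| ≤ h / 2 := by
  have hfloor : ⌊L / h - 1 / 2⌋ = n := by
    rw [hL, mul_div_cancel_left₀ _ hh.ne', add_sub_cancel_right, Int.floor_natCast]
  set r : ℤ := max (-(n : ℤ)) ⌈t / h - 1 / 2⌉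
  have hround : discRound h L t = h * r := by rw [discRound, hfloor]
  have hr : |(r : ℝ) - t / h| ≤ 1 / 2 := by
    have hceil : (⌈t / h - 1 / 2⌉ : ℝ) < t / h - 1 / 2 + 1 := Int.ceil_lt_add_one _
    have hn : -(n : ℝ) ≤ t / h + 1 / 2 := by
      have : (-(n : ℝ) - 1 / 2) * h ≤ t := by linarith [hL ▸ ht.1]
      linarith [(le_div_iff₀ hh).2 this]
    rw [abs_le]
    constructor
    · have : (⌈t / h - 1 / 2⌉ : ℝ) ≤ r := Int.cast_le.2 (le_max_right _ _)
      linarith [Int.le_ceil (t / h - 1 / 2)]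
    · have : (r : ℝ) ≤ t / h + 1 / 2 := by
        rw [Int.cast_max, Int.cast_neg, Int.cast_natCast]
        exact max_le hn (by linarith)
      linarith
  calc |discRound h L t - t| = h * |(r : ℝ) - t / h| := by
        rw [hround, ← abs_of_pos hh, ← abs_mul, abs_of_pos hh, mul_sub, mul_div_cancel₀ _ hh.ne']
    _ ≤ h / 2 := by nlinarith

noncomputable def discCoupling (h L : ℝ) (μ : Measure ℝ) : Measure (ℝ × ℝ) :=
  μ.map fun t => (discRound h L t + discMean h L μ, t)

section discCoupling

variable {h L : ℝ} {μ : Measure ℝ}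

instance [IsProbabilityMeasure μ] : IsProbabilityMeasure (discCoupling h L μ) :=
  isProbabilityMeasure_map (by fun_prop)

lemma map_fst_discCoupling : (discCoupling h L μ).map Prod.fst = discretize h L μ := by
  rw [discCoupling, map_map measurable_fst (by fun_prop)]
  rfl

lemma map_snd_discCoupling : (discCoupling h L μ).map Prod.snd = μ := by
  rw [discCoupling, map_map measurable_snd (by fun_prop)]
  exact map_id

lemma hasSubgaussianMGF_map_sub_discCoupling (hh : 0 < h) {n : ℕ} (hL : L = h * ((n : ℝ) + 1 / 2))
    [IsProbabilityMeasure μ] (hsupp : μ (Set.Icc (-L) L)ᶜ = 0)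
    (hint : Integrable (fun x : ℝ => x) μ) :
    HasSubgaussianMGF id ((‖h‖₊ / 2) ^ 2) ((discCoupling h L μ).map fun p => p.1 - p.2) := by
  set m := discMean h L μ
  have hclose : ∀ᵐ t ∂μ, t ∈ Set.Icc (-L) L ∧ |discRound h L t - t| ≤ h / 2 := by
    filter_upwards [measure_eq_zero_iff_ae_notMem.1 hsupp] with t ht
    exact ⟨not_not.1 ht, abs_discRound_sub_le hh hL (not_not.1 ht)⟩
  have herr : ∀ᵐ t ∂μ, discRound h L t + m - t ∈ Set.Icc (m - h / 2) (m + h / 2) := by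
    filter_upwards [hclose] with t ⟨_, hRt⟩
    have := abs_le.1 hRt
    constructor <;> linarith
  have hRint : Integrable (discRound h L) μ := by
    refine Integrable.of_mem_Icc (-L - h / 2) (L + h / 2) (by fun_prop) ?_
    filter_upwards [hclose] with t ⟨ht, hRt⟩
    have := abs_le.1 hRt
    constructor <;> linarith [ht.1, ht.2]
  have hmean : ∫ t, (discRound h L t + m - t) ∂μ = 0 := by
    have hRm : Integrable (fun t => discRound h L t + m) μ := hRint.add (integrable_const m)
    rw [integral_sub hRm hint, integral_add hRint (integrable_const m),
      integral_const, probReal_univ, one_smul]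
    simp only [m, discMean]
    ring
  rw [discCoupling, map_map (by fun_prop) (by fun_prop),
    HasSubgaussianMGF.id_map_iff (by fun_prop)]
  convert hasSubgaussianMGF_of_mem_Icc_of_integral_eq_zero (by fun_prop) herr hmean
    using 3
  · rfl
  · congr 1
    ring

end discCoupling

lemma measureReal_lt_abs_fst_le (γ : Measure (ℝ × ℝ)) [IsFiniteMeasure γ] (s t : ℝ) :
    (γ.map Prod.fst).real {x | s < |x|} ≤
      (γ.map fun p => p.1 - p.2).real {x | t < |x|} + (γ.map Prod.snd).real {x | s - t < |x|} := by
  have hmeas (c : ℝ) : MeasurableSet {x : ℝ | c < |x|} :=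
    measurableSet_lt measurable_const (by fun_prop)
  rw [map_measureReal_apply measurable_fst (hmeas s), map_measureReal_apply (by fun_prop) (hmeas t),
    map_measureReal_apply measurable_snd (hmeas (s - t))]
  have hcover : Prod.fst ⁻¹' {x | s < |x|} ⊆
      (fun p : ℝ × ℝ => p.1 - p.2) ⁻¹' {x | t < |x|} ∪ Prod.snd ⁻¹' {x | s - t < |x|} := by
    intro p (hp : s < |p.1|)
    rw [Set.mem_union, or_iff_not_imp_left]
    intro (hdiff : ¬t < |p.1 - p.2|)
    show s - t < |p.2|
    linarith [abs_sub_abs_le_abs_sub p.1 p.2]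
  exact (measureReal_mono hcover).trans (measureReal_union_le _ _)

lemma measureReal_convPow_lt_abs_le (γ : Measure (ℝ × ℝ)) [IsProbabilityMeasure γ] (k : ℕ)
    (s t : ℝ) :
    (convPow (γ.map Prod.fst) k).real {x | s < |x|} ≤
      (convPow (γ.map fun p => p.1 - p.2) k).real {x | t < |x|} +
        (convPow (γ.map Prod.snd) k).real {x | s - t < |x|} := by
  have hfst : (γ.iterConv k).map Prod.fst = (γ.map Prod.fst).iterConv k :=
    map_iterConv_addMonoidHom γ (AddMonoidHom.fst ℝ ℝ) measurable_fst k
  have hsnd : (γ.iterConv k).map Prod.snd = (γ.map Prod.snd).iterConv k :=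
    map_iterConv_addMonoidHom γ (AddMonoidHom.snd ℝ ℝ) measurable_snd k
  have hsub : (γ.iterConv k).map (fun p => p.1 - p.2) = (γ.map fun p => p.1 - p.2).iterConv k :=
    map_iterConv_addMonoidHom γ (AddMonoidHom.fst ℝ ℝ - AddMonoidHom.snd ℝ ℝ)
      (measurable_fst.sub measurable_snd) k
  simpa only [convPow_eq_iterConv, hfst, hsnd, hsub] using
    measureReal_lt_abs_fst_le (γ.iterConv k) s t

lemma measureReal_iterConv_lt_abs_le_of_hasSubgaussianMGF {ν : Measure ℝ} [IsProbabilityMeasure ν]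
    {h : ℝ} (hh : 0 < h) (hν : HasSubgaussianMGF id ((‖h‖₊ / 2) ^ 2) ν) {k : ℕ} (hk : 0 < k)
    {η : ℝ} (hη : η ∈ Set.Ioo (0 : ℝ) 1) :
    (ν.iterConv k).real {x | h * √(k / 2 * log (2 / η)) < |x|} ≤ η := by
  set t := h * √(k / 2 * log (2 / η))
  have hlog : 0 ≤ k / 2 * log (2 / η) :=
    mul_nonneg (by positivity) (log_nonneg ((one_le_div hη.1).2 (by linarith [hη.2])))
  have hk0 : (k : ℝ) ≠ 0 := by positivity
  calc _ ≤ _ := measureReal_mono fun x (hx : t < |x|) => hx.le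
    _ ≤ 2 * exp (-t ^ 2 / (2 * ↑(k * (‖h‖₊ / 2) ^ 2 : ℝ≥0))) :=
      (hν.iterConv k).measureReal_abs_ge_le (by positivity)
    _ = 2 * exp (-log (2 / η)) := by
      rw [NNReal.coe_mul, NNReal.coe_pow, NNReal.coe_div, coe_nnnorm, norm_of_nonneg hh.le,
        NNReal.coe_natCast, NNReal.coe_two, mul_pow, sq_sqrt hlog]
      field_simp
    _ = η := by
      rw [exp_neg, exp_log (div_pos two_pos hη.1)]
      field_simp

theorem discretize_convPow_tail_general
    (h : ℝ) (hh : 0 < h) (n : ℕ) (L : ℝ) (hL : L = h * ((n : ℝ) + 1 / 2))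
    (Z : MeasureTheory.Measure ℝ) [MeasureTheory.IsProbabilityMeasure Z]
    (hsupp : Z (Set.Icc (-L) L)ᶜ = 0)
    (hint : MeasureTheory.Integrable (fun x : ℝ => x) Z)
    (k : ℕ) (hk : 0 < k) (η : ℝ) (hη : η ∈ Set.Ioo (0 : ℝ) 1) (s : ℝ) :
    ((convPow (discretize h L Z) k) {x : ℝ | s < |x|}).toReal ≤
      η + ((convPow Z k) {x : ℝ | s - h * Real.sqrt (k / 2 * Real.log (2 / η)) < |x|}).toReal := by
  set γ := discCoupling h L Z
  have : IsProbabilityMeasure (γ.map fun p => p.1 - p.2) := isProbabilityMeasure_map (by fun_prop)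
  have herror : (convPow (γ.map fun p => p.1 - p.2) k).real
      {x | h * √(k / 2 * log (2 / η)) < |x|} ≤ η := by
    rw [convPow_eq_iterConv]
    exact measureReal_iterConv_lt_abs_le_of_hasSubgaussianMGF hh
      (hasSubgaussianMGF_map_sub_discCoupling hh hL hsupp hint) hk hη
  have hcoupling := measureReal_convPow_lt_abs_le γ k s (h * √(k / 2 * log (2 / η)))
  rw [map_fst_discCoupling, map_snd_discCoupling] at hcoupling
  rw [← measureReal_def, ← measureReal_def]
  linarith

/-- Tail of the `k`-fold convolution of a discretized random variable, in terms of
the tail of the `k`-fold convolution of the original variable. -/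
theorem discretize_convPow_tail
    (h : ℝ) (hh : 0 < h) (n : ℕ) (hn : 0 < n) (L : ℝ) (hL : L = h * ((n : ℝ) + 1 / 2))
    (Z : MeasureTheory.Measure ℝ) [MeasureTheory.IsProbabilityMeasure Z]
    (hsupp : Z (Set.Icc (-L) L)ᶜ = 0)
    (hint : MeasureTheory.Integrable (fun x : ℝ => x) Z)
    (k : ℕ) (hk : 0 < k) (η : ℝ) (hη : η ∈ Set.Ioo (0 : ℝ) 1) (s : ℝ) :
    ((convPow (discretize h L Z) k) {x : ℝ | s < |x|}).toReal ≤
      η + ((convPow Z k) {x : ℝ | s - h * Real.sqrt (k / 2 * Real.log (2 / η)) < |x|}).toReal :=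
  discretize_convPow_tail_general h hh n L hL Z hsupp hint k hk η hη s
end

section
/- Let X and Y be real-valued random variables with |X − Y| ≤_{δ_err} ε_err for some ε_err ≥ 0 and δ_err ∈ [0, 1]. Then for every ε ∈ ℝ, δ_Y(ε + ε_err) − δ_err ≤ δ_X(ε) ≤ δ_Y(ε − ε_err) + δ_err. -/
open MeasureTheory ProbabilityTheory Real

/-!
Under the coupling, off the event `|X - Y| > εerr` we have `X ≥ Y - εerr`, and since
`x ↦ max 0 (1 - e^{ε - x})` is monotone, the integrand of `δ_X(ε)` is dominated by that of
`δ_Y(ε - εerr)`. On the bad event the integrand is at most `1`, which costs at most `δerr`.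
Swapping the coupling gives the lower bound.
-/

lemma max_zero_one_sub_exp_le_one (a : ℝ) : max 0 (1 - exp a) ≤ 1 :=
  max_le zero_le_one (by linarith [exp_pos a])

lemma antitone_max_zero_one_sub_exp : Antitone fun a : ℝ => max 0 (1 - exp a) :=
  fun _ _ hab => max_le_max le_rfl (by linarith [exp_le_exp.mpr hab])

lemma deltaCurve_map {α : Type*} [MeasurableSpace α] (μ : Measure α) {f : α → ℝ}
    (hf : Measurable f) (ε : ℝ) :
    deltaCurve (μ.map f) ε = ∫ x, max 0 (1 - exp (ε - f x)) ∂μ :=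
  integral_map hf.aemeasurable
    (by fun_prop : Continuous fun y => max 0 (1 - exp (ε - y))).aestronglyMeasurable

lemma integrable_max_zero_one_sub_exp {α : Type*} [MeasurableSpace α] (μ : Measure α)
    [IsFiniteMeasure μ] {f : α → ℝ} (hf : Measurable f) (ε : ℝ) :
    Integrable (fun x => max 0 (1 - exp (ε - f x))) μ := by
  refine (integrable_const (1 : ℝ)).mono' (by fun_prop) (ae_of_all _ fun x => ?_)
  rw [norm_of_nonneg (le_max_left _ _)]
  exact max_zero_one_sub_exp_le_one _

lemma integral_le_integral_add_measureReal {α : Type*} [MeasurableSpace α] {μ : Measure α}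
    [IsFiniteMeasure μ] {f g : α → ℝ} {s : Set α} (hs : MeasurableSet s)
    (hf : Integrable f μ) (hg : Integrable g μ) (hf_le_one : ∀ x, f x ≤ 1)
    (hg_nonneg : ∀ x, 0 ≤ g x) (hfg : ∀ x ∉ s, f x ≤ g x) :
    ∫ x, f x ∂μ ≤ ∫ x, g x ∂μ + μ.real s := by
  have hs_int : Integrable (s.indicator (1 : α → ℝ)) μ :=
    (integrable_const 1).indicator hs
  have hpointwise : ∀ x, f x ≤ g x + s.indicator (1 : α → ℝ) x := by
    intro x
    by_cases hx : x ∈ s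
    · rw [Set.indicator_of_mem hx, Pi.one_apply]
      linarith [hf_le_one x, hg_nonneg x]
    · rw [Set.indicator_of_notMem hx, add_zero]
      exact hfg x hx
  calc ∫ x, f x ∂μ ≤ ∫ x, (g x + s.indicator (1 : α → ℝ) x) ∂μ :=
        integral_mono hf (hg.add hs_int) hpointwise
    _ = ∫ x, g x ∂μ + μ.real s := by
        rw [integral_add hg hs_int, integral_indicator_one hs]

lemma CouplingApprox.symm {μ ν : Measure ℝ} {η h : ℝ} (hc : CouplingApprox μ ν η h) :
    CouplingApprox ν μ η h := by
  obtain ⟨γ, hγ, hfst, hsnd, hbad⟩ := hc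
  refine ⟨γ.map Prod.swap, Measure.isProbabilityMeasure_map measurable_swap.aemeasurable,
    ?_, ?_, ?_⟩
  · rwa [Measure.map_map measurable_fst measurable_swap]
  · rwa [Measure.map_map measurable_snd measurable_swap]
  · have hmeas : MeasurableSet {p : ℝ × ℝ | h < |p.1 - p.2|} :=
      measurableSet_lt measurable_const (by fun_prop)
    rw [Measure.map_apply measurable_swap hmeas]
    simpa only [Set.preimage_ofPred_eq, Prod.fst_swap, Prod.snd_swap, abs_sub_comm] using hbad

lemma deltaCurve_le_of_couplingApprox {μ ν : Measure ℝ} {η h : ℝ}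
    (hc : CouplingApprox μ ν η h) (ε : ℝ) :
    deltaCurve μ ε ≤ deltaCurve ν (ε - h) + η := by
  obtain ⟨γ, hγ, rfl, rfl, hbad⟩ := hc
  rw [deltaCurve_map γ measurable_fst, deltaCurve_map γ measurable_snd]
  refine (integral_le_integral_add_measureReal
    (measurableSet_lt measurable_const (by fun_prop))
    (integrable_max_zero_one_sub_exp γ measurable_fst ε)
    (integrable_max_zero_one_sub_exp γ measurable_snd (ε - h))
    (fun _ => max_zero_one_sub_exp_le_one _) (fun _ => le_max_left _ _) ?_).trans
    (add_le_add_right hbad _)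
  intro p hp
  have hclose : p.1 - p.2 ≤ h := (le_abs_self _).trans (not_lt.mp hp)
  exact antitone_max_zero_one_sub_exp (by linarith)

theorem delta_from_coupling_general
    (X Y : MeasureTheory.Measure ℝ)
    (εerr δerr : ℝ)
    (hc : CouplingApprox X Y δerr εerr) (ε : ℝ) :
    deltaCurve Y (ε + εerr) - δerr ≤ deltaCurve X ε ∧
      deltaCurve X ε ≤ deltaCurve Y (ε - εerr) + δerr := by
  have hYX := deltaCurve_le_of_couplingApprox hc.symm (ε + εerr)
  rw [add_sub_cancel_right] at hYX
  exact ⟨by linarith, deltaCurve_le_of_couplingApprox hc ε⟩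

/-- A coupling approximation between `X` and `Y` transfers the privacy curve of `Y`
to that of `X`, up to the error parameters. -/
theorem delta_from_coupling
    (X Y : MeasureTheory.Measure ℝ)
    [MeasureTheory.IsProbabilityMeasure X] [MeasureTheory.IsProbabilityMeasure Y]
    (εerr δerr : ℝ) (hεerr : 0 ≤ εerr) (hδerr : δerr ∈ Set.Icc (0 : ℝ) 1)
    (hc : CouplingApprox X Y δerr εerr) (ε : ℝ) :
    deltaCurve Y (ε + εerr) - δerr ≤ deltaCurve X ε ∧
      deltaCurve X ε ≤ deltaCurve Y (ε - εerr) + δerr :=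
  delta_from_coupling_general X Y εerr δerr hc ε
end
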